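/- Under the stationary two-sequence k-mer model with L = 4, transition matrix M = exp(tQ) for the Kimura 3-parameter rate matrix Q with parameters α, β, γ > 0 and branch length t ≥ 0, and uniform stationary vector π, one has E[ ∑_{W ∈ [4]^k} (X₁^W − X₂^W)² ] = 2(n − k + 1)·( 1 − ( (1 + e^{−2(α+β)t} + e^{−2(α+γ)t} + e^{−2(β+γ)t})/4 )^k ). -/

import Mathlib

/-!
Write `u i`, `v i` for the k-mers of the two sequences at position `i`. Expanding the square,
`∑_W (X₁^W - X₂^W)² = ∑_{i,i'} ([u i = u i'] - [u i = v i'] - [v i = u i'] + [v i = v i'])`.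
For `i = i'` the window covers `k` distinct independent sites, so the four expectations are
`1, q^k, q^k, 1` with `q = ∑_w π(w) M(w,w)`. For `i < i'` the leftmost site of the first window
occurs in no other constraint of the event that the two windows agree; since both marginals are
uniform, integrating it out gives a factor `1/4` whatever the other letter is. Hence all four
off-diagonal expectations equal `4^(-k)` and cancel. For K3P, `Q` is diagonalised by the 4×4
Hadamard matrix, so `exp(tQ)` is symmetric with unit row sums and its trace is
`1 + e^{-2(α+β)t} + e^{-2(α+γ)t} + e^{-2(β+γ)t} = 4q`.
-/

open Finset Function Matrix

lemma sum_ite_eq_mul_ite_eq {α R : Type*} [Fintype α] [DecidableEq α] [Semiring R] (a b : α) :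
    ∑ c, ((if a = c then 1 else 0) * (if b = c then 1 else 0) : R) = if a = b then 1 else 0 := by
  simp

lemma sum_sq_sum_ite_sub_sum_ite {κ V : Type*} [Fintype κ] [Fintype V] [DecidableEq V]
    (u v : κ → V) :
    ∑ W, ((∑ i, if u i = W then 1 else 0) - ∑ i, if v i = W then 1 else 0 : ℝ) ^ 2
      = ∑ i, ∑ i', ((if u i = u i' then 1 else 0) - (if u i = v i' then 1 else 0)
          - (if v i = u i' then 1 else 0) + (if v i = v i' then 1 else 0) : ℝ) := by
  calc _ = ∑ W, ∑ i, ∑ i', ((if u i = W then 1 else 0) - (if v i = W then 1 else 0) : ℝ)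
            * ((if u i' = W then 1 else 0) - (if v i' = W then 1 else 0)) := by
        simp only [← sum_sub_distrib, sq, sum_mul_sum]
    _ = ∑ i, ∑ i', ∑ W, ((if u i = W then 1 else 0) - (if v i = W then 1 else 0) : ℝ)
            * ((if u i' = W then 1 else 0) - (if v i' = W then 1 else 0)) := by
        rw [sum_comm]
        exact sum_congr rfl fun i _ => sum_comm
    _ = _ := by
        refine sum_congr rfl fun i _ => sum_congr rfl fun i' _ => ?_
        simp only [sub_mul, mul_sub, sum_sub_distrib, sum_ite_eq_mul_ite_eq]
        ring

section PairSums

variable {m R : Type*} [Fintype m] [DecidableEq m] [NonAssocSemiring R] (ν : m × m → R)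

lemma sum_prod_mul_ite_fst_eq (a : m) :
    ∑ x : m × m, ν x * (if x.1 = a then 1 else 0) = ∑ b, ν (a, b) := by
  simp only [Fintype.sum_prod_type, mul_ite, mul_one, mul_zero]
  rw [sum_comm]
  simp

lemma sum_prod_mul_ite_snd_eq (b : m) :
    ∑ x : m × m, ν x * (if x.2 = b then 1 else 0) = ∑ a, ν (a, b) := by
  simp [Fintype.sum_prod_type]

lemma sum_prod_mul_ite_fst_eq_snd :
    ∑ x : m × m, ν x * (if x.1 = x.2 then 1 else 0) = ∑ a, ν (a, a) := by
  simp [Fintype.sum_prod_type]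

end PairSums

section ProductExpectation

variable {ι σ : Type*} [Fintype ι] [DecidableEq ι]

lemma mul_prod_update_apply (ν : σ → ℝ) (ω : ι → σ) (p : ι) (x : σ) :
    ν (ω p) * ∏ q, ν (update ω p x q) = ν x * ∏ q, ν (ω q) := by
  have hupd : (fun q => ν (update ω p x q)) = update (fun q => ν (ω q)) p (ν x) :=
    comp_update ν ω p x
  rw [hupd, prod_update_of_mem (mem_univ p), sdiff_singleton_eq_erase,
    ← mul_prod_erase univ (fun q => ν (ω q)) (mem_univ p)]
  ring

variable [Fintype σ]

def prodExpect (ν : σ → ℝ) (F : (ι → σ) → ℝ) : ℝ :=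
  ∑ ω, (∏ p, ν (ω p)) * F ω

variable {ν : σ → ℝ}

lemma prodExpect_sum {κ : Type*} (s : Finset κ) (F : κ → (ι → σ) → ℝ) :
    prodExpect ν (fun ω => ∑ a ∈ s, F a ω) = ∑ a ∈ s, prodExpect ν (F a) := by
  simp only [prodExpect, mul_sum]
  exact sum_comm

lemma prodExpect_add (F G : (ι → σ) → ℝ) :
    prodExpect ν (fun ω => F ω + G ω) = prodExpect ν F + prodExpect ν G := by
  simp only [prodExpect, mul_add, sum_add_distrib]

lemma prodExpect_sub (F G : (ι → σ) → ℝ) :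
    prodExpect ν (fun ω => F ω - G ω) = prodExpect ν F - prodExpect ν G := by
  simp only [prodExpect, mul_sub, sum_sub_distrib]

lemma prodExpect_one (hν : ∑ x, ν x = 1) : prodExpect ν (fun _ : ι → σ => 1) = 1 := by
  simp only [prodExpect, mul_one]
  rw [← Fintype.piFinset_univ, ← prod_univ_sum, hν, prod_const_one]

lemma sum_sum_update_apply (p : ι) (F : (ι → σ) → σ → ℝ) :
    ∑ ω, ∑ x, F ω x = ∑ ω, ∑ x, F (update ω p x) (ω p) := by
  have hinv : Involutive fun y : (ι → σ) × σ => (update y.1 p y.2, y.1 p) := by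
    rintro ⟨ω, x⟩
    simp
  simp only [← Fintype.sum_prod_type']
  exact (Fintype.sum_equiv (hinv.toPerm _) _ _ fun _ => by simp).symm

lemma prodExpect_mul_of_update_eq (hν : ∑ x, ν x = 1) (p : ι) (h : σ → ℝ)
    {G : (ι → σ) → ℝ} (hG : ∀ ω x, G (update ω p x) = G ω) :
    prodExpect ν (fun ω => h (ω p) * G ω) = (∑ x, ν x * h x) * prodExpect ν G := by
  calc prodExpect ν (fun ω => h (ω p) * G ω)
      = ∑ ω, ∑ x, ν x * ((∏ q, ν (ω q)) * (h (ω p) * G ω)) := by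
        simp only [prodExpect, ← sum_mul, hν, one_mul]
    _ = ∑ ω, ∑ x, ν x * h x * ((∏ q, ν (ω q)) * G ω) := by
        rw [sum_sum_update_apply p]
        refine sum_congr rfl fun ω _ => sum_congr rfl fun x _ => ?_
        rw [hG, update_self, ← mul_assoc, mul_prod_update_apply]
        ring
    _ = (∑ x, ν x * h x) * prodExpect ν G := by
        rw [prodExpect, sum_mul_sum, sum_comm]

lemma prodExpect_prod_comp_injective (hν : ∑ x, ν x = 1) {k : ℕ} (h : Fin k → σ → ℝ)
    {e : Fin k → ι} (he : Injective e) :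
    prodExpect ν (fun ω => ∏ j, h j (ω (e j))) = ∏ j, ∑ x, ν x * h j x := by
  induction k with
  | zero => simpa using prodExpect_one hν
  | succ k ih =>
    have hrest : ∀ (ω : ι → σ) x, ∏ j : Fin k, h j.succ (update ω (e 0) x (e j.succ))
        = ∏ j : Fin k, h j.succ (ω (e j.succ)) := fun ω x =>
      prod_congr rfl fun j _ => by rw [update_of_ne (he.ne (Fin.succ_ne_zero j))]
    simp only [Fin.prod_univ_succ]
    rw [prodExpect_mul_of_update_eq hν (e 0) (h 0) hrest]
    exact congrArg _ (ih (fun j => h j.succ) (he.comp (Fin.succ_injective k)))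

variable {α : Type*} [DecidableEq α]

lemma prodExpect_ite_forall_eq_pow (hν : ∑ x, ν x = 1) (f g : σ → α) {k : ℕ}
    {e : Fin k → ι} (he : Injective e) :
    prodExpect ν (fun ω => if ∀ j, f (ω (e j)) = g (ω (e j)) then 1 else 0)
      = (∑ x, ν x * if f x = g x then 1 else 0) ^ k := by
  simpa only [prod_boole, mem_univ, true_implies, prod_const, card_univ, Fintype.card_fin]
    using prodExpect_prod_comp_injective hν (fun _ x => if f x = g x then 1 else 0) he

variable [Fintype α]

lemma prodExpect_ite_forall_eq_of_lt (hν : ∑ x, ν x = 1) {f : σ → α} {c : ℝ}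
    (hf : ∀ a, ∑ x, ν x * (if f x = a then 1 else 0) = c) (g : σ → α) {k : ℕ}
    {e₁ e₂ : Fin k → ι} (he₁ : Injective e₁) (he : ∀ j j', e₁ j = e₂ j' → j' < j) :
    prodExpect ν (fun ω => if ∀ j, f (ω (e₁ j)) = g (ω (e₂ j)) then 1 else 0) = c ^ k := by
  induction k with
  | zero => simpa using prodExpect_one hν
  | succ k ih =>
    -- Integrate out the site `e₁ 0`, which occurs only in the constraint `j = 0`.
    set R : (ι → σ) → ℝ := fun ω =>
      if ∀ j : Fin k, f (ω (e₁ j.succ)) = g (ω (e₂ j.succ)) then 1 else 0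
    set G : α → (ι → σ) → ℝ := fun a ω => (if g (ω (e₂ 0)) = a then 1 else 0) * R ω
    have hsplit : ∀ ω : ι → σ, (if ∀ j, f (ω (e₁ j)) = g (ω (e₂ j)) then (1 : ℝ) else 0)
        = ∑ a, (if f (ω (e₁ 0)) = a then 1 else 0) * G a ω := by
      intro ω
      simp only [G, R, ← mul_assoc]
      rw [← sum_mul, sum_ite_eq_mul_ite_eq, ite_zero_mul_ite_zero, mul_one]
      simp only [Fin.forall_fin_succ]
    have hne : ∀ j, e₂ j ≠ e₁ 0 := fun j h => (Fin.not_lt_zero j) (he 0 j h.symm)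
    have hG : ∀ a ω x, G a (update ω (e₁ 0) x) = G a ω := by
      intro a ω x
      simp only [G, R, update_of_ne (hne _), update_of_ne (he₁.ne (Fin.succ_ne_zero _))]
    have hR : ∀ ω, ∑ a, G a ω = R ω := fun ω => by simp [G]
    calc prodExpect ν (fun ω => if ∀ j, f (ω (e₁ j)) = g (ω (e₂ j)) then 1 else 0)
        = ∑ a, prodExpect ν (fun ω => (if f (ω (e₁ 0)) = a then 1 else 0) * G a ω) := by
          simp only [hsplit, prodExpect_sum]
      _ = ∑ a, c * prodExpect ν (G a) := sum_congr rfl fun a _ => by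
          rw [prodExpect_mul_of_update_eq hν (e₁ 0) (fun x => if f x = a then 1 else 0) (hG a), hf]
      _ = c ^ (k + 1) := by
          have ih' : prodExpect ν R = c ^ k := ih (he₁.comp (Fin.succ_injective k))
            fun j j' h => Fin.succ_lt_succ_iff.mp (he _ _ h)
          rw [← mul_sum, ← prodExpect_sum]
          simp only [hR, ih', pow_succ']

end ProductExpectation

section Kmer

variable {k n : ℕ}

lemma val_add_val_lt (hkn : k ≤ n) (i : Fin (n - k + 1)) (j : Fin k) : (i : ℕ) + j < n := by
  have := i.isLt
  have := j.isLt
  omega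

def kmerWindow (hkn : k ≤ n) (i : Fin (n - k + 1)) (j : Fin k) : Fin n :=
  ⟨i + j, val_add_val_lt hkn i j⟩

lemma kmerWindow_injective (hkn : k ≤ n) (i : Fin (n - k + 1)) :
    Injective (kmerWindow hkn i) := fun j j' h => by
  simp only [kmerWindow, Fin.ext_iff] at h
  exact Fin.ext (by omega)

lemma lt_of_kmerWindow_eq (hkn : k ≤ n) {i i' : Fin (n - k + 1)} (hi : i < i') {j j' : Fin k}
    (h : kmerWindow hkn i j = kmerWindow hkn i' j') : j' < j := by
  simp only [kmerWindow, Fin.ext_iff] at h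
  rw [Fin.lt_def] at hi ⊢
  omega

variable {σ α : Type*} [DecidableEq α]

def kmerCount (hkn : k ≤ n) (f : σ → α) (W : Fin k → α) (ω : Fin n → σ) : ℝ :=
  ∑ i, if ∀ j, f (ω (kmerWindow hkn i j)) = W j then 1 else 0

def kmerMatch (hkn : k ≤ n) (f g : σ → α) (i i' : Fin (n - k + 1)) (ω : Fin n → σ) : ℝ :=
  if ∀ j, f (ω (kmerWindow hkn i j)) = g (ω (kmerWindow hkn i' j)) then 1 else 0

lemma kmerMatch_comm (hkn : k ≤ n) (f g : σ → α) (i i' : Fin (n - k + 1)) :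
    kmerMatch hkn f g i i' = kmerMatch hkn g f i' i := by
  funext ω
  simp only [kmerMatch, eq_comm]

lemma sum_sq_kmerCount_sub [Fintype α] (hkn : k ≤ n) (f g : σ → α) (ω : Fin n → σ) :
    ∑ W, (kmerCount hkn f W ω - kmerCount hkn g W ω) ^ 2
      = ∑ i, ∑ i', (kmerMatch hkn f f i i' ω - kmerMatch hkn f g i i' ω
          - kmerMatch hkn g f i i' ω + kmerMatch hkn g g i i' ω) := by
  simpa only [kmerCount, kmerMatch, ← funext_iff] using sum_sq_sum_ite_sub_sum_ite
    (fun i j => f (ω (kmerWindow hkn i j))) (fun i j => g (ω (kmerWindow hkn i j)))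

variable [Fintype σ] {ν : σ → ℝ}

lemma prodExpect_kmerMatch_self (hkn : k ≤ n) (hν : ∑ x, ν x = 1) (f g : σ → α)
    (i : Fin (n - k + 1)) :
    prodExpect ν (kmerMatch hkn f g i i) = (∑ x, ν x * if f x = g x then 1 else 0) ^ k :=
  prodExpect_ite_forall_eq_pow hν f g (kmerWindow_injective hkn i)

lemma prodExpect_kmerMatch_of_ne [Fintype α] (hkn : k ≤ n) (hν : ∑ x, ν x = 1) {f g : σ → α}
    {c : ℝ} (hf : ∀ a, ∑ x, ν x * (if f x = a then 1 else 0) = c)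
    (hg : ∀ a, ∑ x, ν x * (if g x = a then 1 else 0) = c)
    {i i' : Fin (n - k + 1)} (hii : i ≠ i') :
    prodExpect ν (kmerMatch hkn f g i i') = c ^ k := by
  rcases lt_or_gt_of_ne hii with hlt | hgt
  · exact prodExpect_ite_forall_eq_of_lt hν hf g (kmerWindow_injective hkn i)
      fun _ _ => lt_of_kmerWindow_eq hkn hlt
  · rw [kmerMatch_comm]
    exact prodExpect_ite_forall_eq_of_lt hν hg f (kmerWindow_injective hkn i')
      fun _ _ => lt_of_kmerWindow_eq hkn hgt

theorem prodExpect_sum_sq_kmerCount_sub [Fintype α] (hkn : k ≤ n) (hν : ∑ x, ν x = 1)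
    {f g : σ → α} {c : ℝ} (hf : ∀ a, ∑ x, ν x * (if f x = a then 1 else 0) = c)
    (hg : ∀ a, ∑ x, ν x * (if g x = a then 1 else 0) = c) :
    prodExpect ν (fun ω => ∑ W, (kmerCount hkn f W ω - kmerCount hkn g W ω) ^ 2)
      = 2 * ((n - k + 1 : ℕ) : ℝ) * (1 - (∑ x, ν x * if f x = g x then 1 else 0) ^ k) := by
  set q := ∑ x, ν x * if f x = g x then 1 else 0
  have hself : ∀ (f' : σ → α) i, prodExpect ν (kmerMatch hkn f' f' i i) = 1 := fun f' i => by
    simp [prodExpect_kmerMatch_self hkn hν, hν]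
  have hterm : ∀ i i', prodExpect ν (kmerMatch hkn f f i i')
      - prodExpect ν (kmerMatch hkn f g i i') - prodExpect ν (kmerMatch hkn g f i i')
      + prodExpect ν (kmerMatch hkn g g i i')
      = if i = i' then 2 - 2 * q ^ k else 0 := by
    intro i i'
    split_ifs with hii
    · subst hii
      rw [hself, hself, kmerMatch_comm hkn g, prodExpect_kmerMatch_self hkn hν]
      ring
    · rw [prodExpect_kmerMatch_of_ne hkn hν hf hf hii, prodExpect_kmerMatch_of_ne hkn hν hf hg hii,
        prodExpect_kmerMatch_of_ne hkn hν hg hf hii, prodExpect_kmerMatch_of_ne hkn hν hg hg hii]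
      ring
  simp only [sum_sq_kmerCount_sub, prodExpect_sum, prodExpect_add, prodExpect_sub, hterm,
    sum_ite_eq, mem_univ, if_true, sum_const, card_univ, Fintype.card_fin, nsmul_eq_mul]
  ring

end Kmer

section Kimura

def kimura3Rate (α β γ : ℝ) : Matrix (Fin 4) (Fin 4) ℝ :=
  !![-(α + β + γ), α, β, γ;
     α, -(α + β + γ), γ, β;
     β, γ, -(α + β + γ), α;
     γ, β, α, -(α + β + γ)]

def hadamard4 : Matrix (Fin 4) (Fin 4) ℝ :=
  !![1, 1, 1, 1; 1, 1, -1, -1; 1, -1, 1, -1; 1, -1, -1, 1]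

lemma smul_hadamard4_mul_hadamard4 : ((1 / 4 : ℝ) • hadamard4) * hadamard4 = 1 := by
  ext i j
  fin_cases i <;> fin_cases j <;> simp [hadamard4, mul_apply, Fin.sum_univ_four, one_apply] <;>
    norm_num

lemma hadamard4_inv : hadamard4⁻¹ = (1 / 4 : ℝ) • hadamard4 :=
  inv_eq_left_inv smul_hadamard4_mul_hadamard4

lemma isUnit_hadamard4 : IsUnit hadamard4 :=
  IsUnit.of_mul_eq_one_right _ smul_hadamard4_mul_hadamard4

lemma kimura3Rate_eq_conj (α β γ : ℝ) : kimura3Rate α β γ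
    = hadamard4 * diagonal ![0, -2 * (β + γ), -2 * (α + γ), -2 * (α + β)] * hadamard4⁻¹ := by
  rw [hadamard4_inv]
  ext i j
  fin_cases i <;> fin_cases j <;>
    simp [kimura3Rate, hadamard4, mul_apply, Fin.sum_univ_four, vecMul_diagonal] <;> ring

lemma exp_smul_kimura3Rate (α β γ t : ℝ) : NormedSpace.exp (t • kimura3Rate α β γ)
    = hadamard4 * diagonal ![1, Real.exp (-2 * (β + γ) * t), Real.exp (-2 * (α + γ) * t),
        Real.exp (-2 * (α + β) * t)] * hadamard4⁻¹ := by
  rw [kimura3Rate_eq_conj, ← Matrix.smul_mul, ← Matrix.mul_smul, ← diagonal_smul,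
    exp_conj _ _ isUnit_hadamard4, exp_diagonal]
  congr
  funext i
  fin_cases i <;> simp [← Real.exp_eq_exp_ℝ, mul_comm]

lemma trace_exp_smul_kimura3Rate (α β γ t : ℝ) : (NormedSpace.exp (t • kimura3Rate α β γ)).trace
    = 1 + Real.exp (-2 * (α + β) * t) + Real.exp (-2 * (α + γ) * t)
        + Real.exp (-2 * (β + γ) * t) := by
  rw [exp_smul_kimura3Rate, trace_mul_comm, ← Matrix.mul_assoc,
    nonsing_inv_mul _ ((isUnit_iff_isUnit_det _).mp isUnit_hadamard4), Matrix.one_mul,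
    trace_diagonal, Fin.sum_univ_four]
  simp
  ring

lemma exp_smul_kimura3Rate_row_sum (α β γ t : ℝ) (a : Fin 4) :
    ∑ b, NormedSpace.exp (t • kimura3Rate α β γ) a b = 1 := by
  rw [exp_smul_kimura3Rate, hadamard4_inv]
  fin_cases a <;> simp [hadamard4, mul_apply, Fin.sum_univ_four, vecMul_diagonal] <;> ring

lemma kimura3Rate_transpose (α β γ : ℝ) : (kimura3Rate α β γ)ᵀ = kimura3Rate α β γ := by
  ext i j
  fin_cases i <;> fin_cases j <;> rfl

lemma exp_smul_kimura3Rate_col_sum (α β γ t : ℝ) (b : Fin 4) :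
    ∑ a, NormedSpace.exp (t • kimura3Rate α β γ) a b = 1 := by
  have hsymm :
      (NormedSpace.exp (t • kimura3Rate α β γ))ᵀ = NormedSpace.exp (t • kimura3Rate α β γ) := by
    rw [← exp_transpose, transpose_smul, kimura3Rate_transpose]
  calc ∑ a, NormedSpace.exp (t • kimura3Rate α β γ) a b
      = ∑ a, (NormedSpace.exp (t • kimura3Rate α β γ))ᵀ b a := rfl
    _ = 1 := by rw [hsymm, exp_smul_kimura3Rate_row_sum]

theorem prodExpect_sum_sq_kmerCount_sub_kimura3 {k n : ℕ} (hkn : k ≤ n) (α β γ t : ℝ) :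
    prodExpect (fun x : Fin 4 × Fin 4 => 1 / 4 * NormedSpace.exp (t • kimura3Rate α β γ) x.1 x.2)
      (fun ω => ∑ W, (kmerCount hkn Prod.fst W ω - kmerCount hkn Prod.snd W ω) ^ 2)
      = 2 * ((n - k + 1 : ℕ) : ℝ) *
        (1 - ((1 + Real.exp (-2 * (α + β) * t) + Real.exp (-2 * (α + γ) * t)
                + Real.exp (-2 * (β + γ) * t)) / 4) ^ k) := by
  set M := NormedSpace.exp (t • kimura3Rate α β γ)
  have hrow : ∀ a, ∑ b, M a b = 1 := exp_smul_kimura3Rate_row_sum α β γ t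
  have hcol : ∀ b, ∑ a, M a b = 1 := exp_smul_kimura3Rate_col_sum α β γ t
  have htrace : ∑ a, M a a = 1 + Real.exp (-2 * (α + β) * t) + Real.exp (-2 * (α + γ) * t)
      + Real.exp (-2 * (β + γ) * t) := trace_exp_smul_kimura3Rate α β γ t
  have hν : ∑ x : Fin 4 × Fin 4, 1 / 4 * M x.1 x.2 = 1 := by
    simp only [Fintype.sum_prod_type, ← mul_sum, hrow]
    norm_num
  have hfst : ∀ a, ∑ x : Fin 4 × Fin 4, 1 / 4 * M x.1 x.2 * (if x.1 = a then 1 else 0) = 1 / 4 :=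
    fun a => by rw [sum_prod_mul_ite_fst_eq, ← mul_sum, hrow, mul_one]
  have hsnd : ∀ b, ∑ x : Fin 4 × Fin 4, 1 / 4 * M x.1 x.2 * (if x.2 = b then 1 else 0) = 1 / 4 :=
    fun b => by rw [sum_prod_mul_ite_snd_eq, ← mul_sum, hcol, mul_one]
  rw [prodExpect_sum_sq_kmerCount_sub hkn hν hfst hsnd, sum_prod_mul_ite_fst_eq_snd, ← mul_sum,
    htrace]
  ring

end Kimura

theorem kimura3_kmer_expected_squared_distance
    (k n : ℕ) (hkn : k ≤ n)
    (α β γ : ℝ)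
    (t : ℝ)
    (Q : Matrix (Fin 4) (Fin 4) ℝ)
    (hQ : Q = !![-(α + β + γ), α, β, γ;
                 α, -(α + β + γ), γ, β;
                 β, γ, -(α + β + γ), α;
                 γ, β, α, -(α + β + γ)])
    (M : Matrix (Fin 4) (Fin 4) ℝ)
    (hM : M = NormedSpace.exp (t • Q))
    (prob : (Fin n → Fin 4 × Fin 4) → ℝ)
    (hprob : ∀ ω, prob ω = ∏ i, (1 / 4 : ℝ) * M (ω i).1 (ω i).2)
    (E : ((Fin n → Fin 4 × Fin 4) → ℝ) → ℝ)
    (hE : ∀ f, E f = ∑ ω, prob ω * f ω)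
    (X₁ X₂ : (Fin k → Fin 4) → (Fin n → Fin 4 × Fin 4) → ℝ)
    (hX₁ : ∀ W ω, X₁ W ω = ∑ i : Fin (n - k + 1),
      if ∀ j : Fin k, (ω ⟨i.1 + j.1, by have := i.2; have := j.2; omega⟩).1 = W j
        then 1 else 0)
    (hX₂ : ∀ W ω, X₂ W ω = ∑ i : Fin (n - k + 1),
      if ∀ j : Fin k, (ω ⟨i.1 + j.1, by have := i.2; have := j.2; omega⟩).2 = W j
        then 1 else 0) :
    E (fun ω => ∑ W : Fin k → Fin 4, (X₁ W ω - X₂ W ω) ^ 2)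
      = 2 * ((n - k + 1 : ℕ) : ℝ) *
        (1 - ((1 + Real.exp (-2 * (α + β) * t) + Real.exp (-2 * (α + γ) * t)
                + Real.exp (-2 * (β + γ) * t)) / 4) ^ k) := by
  have hcount : (fun ω => ∑ W, (X₁ W ω - X₂ W ω) ^ 2)
      = fun ω => ∑ W, (kmerCount hkn Prod.fst W ω - kmerCount hkn Prod.snd W ω) ^ 2 := by
    funext ω
    simp only [hX₁, hX₂]
    rfl
  have hexpect : E = prodExpect (fun x : Fin 4 × Fin 4 => 1 / 4 * M x.1 x.2) := by
    funext f
    simp only [hE, hprob, prodExpect]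
  rw [hexpect, hcount, hM, hQ]
  exact prodExpect_sum_sq_kmerCount_sub_kimura3 hkn α β γ t
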